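/- Let T be self-adjoint on H with σ(T) ⊆ Δ ⊆ ℝ closed, B bounded with ‖B‖ = b, A = T + B, and G(λ) = (A − λ)⁻¹ B (T − λ)⁻¹. For d > b and c ∈ ℝ with dist(c + iτ, Δ) ≥ max(d/2, |τ|) for all real τ, the integral of G along the vertical segment {c + iτ : |τ| ≤ d} is bounded in norm by 2bd/((d/2 − b)(d/2)), and the integral along each vertical ray segment {c + iτ : d ≤ |τ| ≤ γ} is bounded in norm by b/(d − b) uniformly in γ > d. -/

import Mathlib

/-- The resolvent-type expression `(A − z)⁻¹` for a bounded operator. -/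
noncomputable def resolventOp {H : Type*} [NormedAddCommGroup H] [InnerProductSpace ℂ H]
    [CompleteSpace H] (A : H →L[ℂ] H) (z : ℂ) : H →L[ℂ] H :=
  Ring.inverse (A - z • (1 : H →L[ℂ] H))

section Aux

variable {H : Type*} [NormedAddCommGroup H] [InnerProductSpace ℂ H] [CompleteSpace H]

lemma res_bound_aux (T : H →L[ℂ] H) (hT : IsSelfAdjoint T) {z : ℂ} {ε : ℝ} (hε : 0 < ε)
    (h : ∀ x ∈ spectrum ℂ T, ε ≤ ‖x - z‖) :
    IsUnit (T - z • (1 : H →L[ℂ] H)) ∧ ‖Ring.inverse (T - z • (1 : H →L[ℂ] H))‖ ≤ ε⁻¹ := by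
  have : IsStarNormal T := hT.isStarNormal
  have hz : z ∉ spectrum ℂ T := by
    intro hz
    have := h z hz
    simp at this
    linarith
  have hunit : IsUnit (T - z • (1 : H →L[ℂ] H)) := by
    have := spectrum.notMem_iff.mp hz
    rw [Algebra.algebraMap_eq_smul_one] at this
    simpa using this.neg
  have hne : ∀ x ∈ spectrum ℂ T, x - z ≠ 0 := fun x hx => by
    have := h x hx
    intro h0
    rw [h0] at this
    simp at this
    linarith
  have hf : ContinuousOn (fun x : ℂ => (x - z)⁻¹) (spectrum ℂ T) :=
    ContinuousOn.inv₀ (by fun_prop) hne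
  have hg : ContinuousOn (fun x : ℂ => x - z) (spectrum ℂ T) := by fun_prop
  have hTz : T - z • (1 : H →L[ℂ] H) = cfc (fun x : ℂ => x - z) T := by
    rw [cfc_sub (fun x : ℂ => x) (fun _ : ℂ => z) T, cfc_id' ℂ T, cfc_const z T,
      Algebra.algebraMap_eq_smul_one]
  have hmul : cfc (fun x : ℂ => (x - z)⁻¹) T * (T - z • (1 : H →L[ℂ] H)) = 1 := by
    rw [hTz, ← cfc_mul _ _ T hf hg]
    calc cfc (fun x : ℂ => (x - z)⁻¹ * (x - z)) T = cfc (fun _ : ℂ => (1 : ℂ)) T :=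
          cfc_congr fun x hx => inv_mul_cancel₀ (hne x hx)
      _ = 1 := by rw [cfc_const 1 T, map_one]
  obtain ⟨u, hu⟩ := hunit
  have hinv : Ring.inverse (T - z • (1 : H →L[ℂ] H)) = cfc (fun x : ℂ => (x - z)⁻¹) T := by
    have h2 : (↑u⁻¹ : H →L[ℂ] H) = cfc (fun x : ℂ => (x - z)⁻¹) T := by
      apply Units.inv_eq_of_mul_eq_one_left
      rw [hu]; exact hmul
    rw [← hu, Ring.inverse_unit, h2]
  refine ⟨⟨u, hu⟩, ?_⟩
  rw [hinv]
  refine norm_cfc_le (by positivity) fun x hx => ?_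
  rw [norm_inv]
  exact inv_anti₀ hε (h x hx)

lemma G_bound_aux (T B : H →L[ℂ] H) (hT : IsSelfAdjoint T) {z : ℂ} {m : ℝ} (hm : ‖B‖ < m)
    (h : ∀ x ∈ spectrum ℂ T, m ≤ ‖x - z‖) :
    ‖resolventOp (T + B) z * B * resolventOp T z‖ ≤ ‖B‖ / ((m - ‖B‖) * m) := by
  have hm0 : 0 < m := lt_of_le_of_lt (norm_nonneg B) hm
  obtain ⟨hu, hR⟩ := res_bound_aux T hT hm0 h
  set R := Ring.inverse (T - z • (1 : H →L[ℂ] H)) with hRdef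
  set x := -(R * B) with hxdef
  have hxnorm : ‖x‖ ≤ ‖B‖ / m := by
    rw [hxdef, norm_neg]
    calc ‖R * B‖ ≤ ‖R‖ * ‖B‖ := norm_mul_le R B
      _ ≤ m⁻¹ * ‖B‖ := by gcongr
      _ = ‖B‖ / m := by rw [div_eq_mul_inv, mul_comm]
  have hx1 : ‖x‖ < 1 := lt_of_le_of_lt hxnorm (by rw [div_lt_one hm0]; exact hm)
  have hSsum : Ring.inverse (1 - x) = ∑' n : ℕ, x ^ n := (geom_series_eq_inverse x hx1).symm
  have hS : ‖Ring.inverse (1 - x)‖ ≤ (1 - ‖x‖)⁻¹ := by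
    rw [hSsum]
    have hb : ∀ n : ℕ, ‖x ^ n‖ ≤ ‖x‖ ^ n := by
      intro n
      cases n with
      | zero => rw [pow_zero, pow_zero]; exact ContinuousLinearMap.norm_id_le
      | succ k => exact norm_pow_le' x k.succ_pos
    exact tsum_of_norm_bounded (hasSum_geometric_of_lt_one (norm_nonneg x) hx1) hb
  have hfact : (T + B) - z • (1 : H →L[ℂ] H) = (T - z • (1 : H →L[ℂ] H)) * (1 - x) := by
    have h1 : (T - z • (1 : H →L[ℂ] H)) * R = 1 := Ring.mul_inverse_cancel _ hu
    rw [hxdef, sub_neg_eq_add, mul_add, mul_one, ← mul_assoc, h1, one_mul]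
    abel
  have hux : IsUnit (1 - x) := isUnit_one_sub_of_norm_lt_one hx1
  have hA : Ring.inverse ((T + B) - z • (1 : H →L[ℂ] H))
      = Ring.inverse (1 - x) * R := by
    obtain ⟨u, huu⟩ := hu
    obtain ⟨v, hvv⟩ := hux
    rw [hfact, ← huu, ← hvv, ← Units.val_mul, Ring.inverse_unit, mul_inv_rev,
      Units.val_mul, hRdef, ← huu]
    simp [Ring.inverse_unit]
  have hpos : 0 < 1 - ‖B‖ / m := by
    rw [sub_pos, div_lt_one hm0]; exact hm
  have hS' : ‖Ring.inverse (1 - x)‖ ≤ (1 - ‖B‖ / m)⁻¹ :=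
    hS.trans (inv_anti₀ hpos (by linarith))
  have hAnorm : ‖Ring.inverse ((T + B) - z • (1 : H →L[ℂ] H))‖ ≤ (m - ‖B‖)⁻¹ := by
    rw [hA]
    calc ‖Ring.inverse (1 - x) * R‖ ≤ ‖Ring.inverse (1 - x)‖ * ‖R‖ := norm_mul_le _ _
      _ ≤ (1 - ‖B‖ / m)⁻¹ * m⁻¹ :=
          mul_le_mul hS' hR (norm_nonneg R) (by positivity)
      _ = (m - ‖B‖)⁻¹ := by
          rw [← mul_inv]
          congr 1
          field_simp
  calc ‖resolventOp (T + B) z * B * resolventOp T z‖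
      ≤ ‖resolventOp (T + B) z‖ * ‖B‖ * ‖resolventOp T z‖ :=
        le_trans (norm_mul_le _ _) (by gcongr; exact norm_mul_le _ _)
    _ ≤ (m - ‖B‖)⁻¹ * ‖B‖ * m⁻¹ := by
        have hmb : (0:ℝ) < m - ‖B‖ := by linarith
        unfold resolventOp
        exact mul_le_mul (mul_le_mul_of_nonneg_right hAnorm (norm_nonneg B)) hR
          (norm_nonneg _) (by positivity)
    _ = ‖B‖ / ((m - ‖B‖) * m) := by field_simp

lemma aux_integrable (b d γ : ℝ) (hbd : b < d) (hγ : d ≤ γ) :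
    IntervalIntegrable (fun τ => b * ((τ - b)^2)⁻¹) MeasureTheory.volume d γ := by
  apply ContinuousOn.intervalIntegrable
  apply continuousOn_const.mul
  apply ContinuousOn.inv₀ (by fun_prop)
  intro τ hτ
  rw [Set.uIcc_of_le hγ] at hτ
  have : b < τ := lt_of_lt_of_le hbd hτ.1
  exact pow_ne_zero 2 (sub_ne_zero.mpr this.ne')

lemma aux_int_val (b d γ : ℝ) (hb : 0 ≤ b) (hbd : b < d) (hγ : d < γ) :
    |∫ τ in d..γ, b * ((τ - b)^2)⁻¹| ≤ b / (d - b) := by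
  have h1 : ∫ τ in d..γ, b * ((τ - b)^2)⁻¹
      = b * ((d - b)⁻¹ - (γ - b)⁻¹) := by
    rw [intervalIntegral.integral_const_mul]
    congr 1
    have h2 : (fun τ : ℝ => ((τ - b)^2)⁻¹) = fun τ : ℝ => (fun x : ℝ => x ^ (-2 : ℤ)) (τ - b) := by
      funext τ
      show ((τ - b) ^ 2)⁻¹ = (τ - b) ^ (-2 : ℤ)
      rw [zpow_neg]
      norm_cast
    rw [h2, intervalIntegral.integral_comp_sub_right (fun x : ℝ => x ^ (-2 : ℤ)) b]
    rw [integral_zpow]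
    · push_cast
      have hd : d - b ≠ 0 := by linarith
      have hg : γ - b ≠ 0 := by linarith
      field_simp
      ring
    · right
      constructor
      · norm_num
      · rw [Set.uIcc_of_le (by linarith)]
        intro h0
        have := h0.1
        linarith
  rw [h1]
  have hγb : (0:ℝ) < γ - b := by linarith
  have hdb : (0:ℝ) < d - b := by linarith
  rw [abs_of_nonneg]
  · have : (γ - b)⁻¹ ≥ 0 := by positivity
    rw [div_eq_mul_inv]
    nlinarith
  · have h3 : (γ - b)⁻¹ ≤ (d - b)⁻¹ := by
      apply inv_anti₀ hdb
      linarith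
    nlinarith

end Aux

/-- Let `T` be self-adjoint with spectrum in the closed set `Δ ⊆ ℝ`, `B`
bounded with `‖B‖ = b < d/2`, `A = T + B`, `G(λ) = (A − λ)⁻¹ B (T − λ)⁻¹`.  If the real
number `c` lies in a gap of `Δ` of width `≥ d`, so that `dist(c + iτ, Δ) ≥ max(d/2, |τ|)` for
all real `τ`, then the integral of `G` along the vertical segment `{c + iτ : |τ| ≤ d}` is
bounded in norm by `2bd/((d/2 − b)(d/2))`, and the integral along each vertical ray segment
`{c + iτ : d ≤ |τ| ≤ γ}` is bounded in norm by `b/(d − b)`, uniformly in `γ > d`. -/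
theorem G_vertical_segment_bounds
    {H : Type*} [NormedAddCommGroup H] [InnerProductSpace ℂ H] [CompleteSpace H]
    (T B : H →L[ℂ] H) (hT : IsSelfAdjoint T)
    (Δ : Set ℝ) (hΔ : IsClosed Δ)
    (hspec : spectrum ℂ T ⊆ (fun t : ℝ => (t : ℂ)) '' Δ)
    (d : ℝ) (hB : ‖B‖ < d / 2)
    (c : ℝ)
    (hc : ∀ τ : ℝ, max (d / 2) |τ|
        ≤ Metric.infDist ((c : ℂ) + (τ : ℂ) * Complex.I) ((fun t : ℝ => (t : ℂ)) '' Δ))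
    (G : ℂ → H →L[ℂ] H)
    (hG : ∀ z, G z = resolventOp (T + B) z * B * resolventOp T z) :
    ‖∫ τ in (-d)..d, G ((c : ℂ) + (τ : ℂ) * Complex.I)‖
        ≤ 2 * ‖B‖ * d / ((d / 2 - ‖B‖) * (d / 2)) ∧
      ∀ γ : ℝ, d < γ →
        ‖∫ τ in d..γ, G ((c : ℂ) + (τ : ℂ) * Complex.I)‖ ≤ ‖B‖ / (d - ‖B‖) ∧
        ‖∫ τ in (-γ)..(-d), G ((c : ℂ) + (τ : ℂ) * Complex.I)‖ ≤ ‖B‖ / (d - ‖B‖) := by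
  have hb0 : (0:ℝ) ≤ ‖B‖ := norm_nonneg B
  have hd0 : (0:ℝ) < d := by linarith
  -- the key pointwise bound
  have key : ∀ τ m : ℝ, ‖B‖ < m → m ≤ max (d / 2) |τ| →
      ‖G ((c : ℂ) + (τ : ℂ) * Complex.I)‖ ≤ ‖B‖ / ((m - ‖B‖) * m) := by
    intro τ m hm hle
    rw [hG]
    apply G_bound_aux T B hT hm
    intro x hx
    calc m ≤ max (d / 2) |τ| := hle
      _ ≤ Metric.infDist ((c : ℂ) + (τ : ℂ) * Complex.I) ((fun t : ℝ => (t : ℂ)) '' Δ) := hc τ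
      _ ≤ dist ((c : ℂ) + (τ : ℂ) * Complex.I) x := Metric.infDist_le_dist_of_mem (hspec hx)
      _ = ‖x - ((c : ℂ) + (τ : ℂ) * Complex.I)‖ := by
          rw [dist_eq_norm, norm_sub_rev]
  constructor
  · -- the central segment
    have hbd : (0:ℝ) < (d / 2 - ‖B‖) * (d / 2) := by nlinarith
    calc ‖∫ τ in (-d)..d, G ((c : ℂ) + (τ : ℂ) * Complex.I)‖
        ≤ ‖B‖ / ((d / 2 - ‖B‖) * (d / 2)) * |d - (-d)| := by
          apply intervalIntegral.norm_integral_le_of_norm_le_const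
          intro τ _
          exact key τ (d / 2) hB (le_max_left _ _)
      _ = 2 * ‖B‖ * d / ((d / 2 - ‖B‖) * (d / 2)) := by
          rw [sub_neg_eq_add, abs_of_pos (by linarith)]
          ring
  · intro γ hγ
    have hBd : ‖B‖ < d := by linarith
    set g : ℝ → ℝ := fun τ => ‖B‖ * ((τ - ‖B‖)^2)⁻¹ with hgdef
    have hgle : ∀ m : ℝ, d ≤ m → ‖B‖ / ((m - ‖B‖) * m) ≤ g m := by
      intro m hdm
      have h1 : (0:ℝ) < m - ‖B‖ := by linarith
      rw [hgdef]
      simp only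
      rw [← div_eq_mul_inv, pow_two]
      gcongr
      all_goals nlinarith
    constructor
    · calc ‖∫ τ in d..γ, G ((c : ℂ) + (τ : ℂ) * Complex.I)‖
          ≤ |∫ τ in d..γ, g τ| := by
            apply intervalIntegral.norm_integral_le_abs_of_norm_le _
              (aux_integrable ‖B‖ d γ hBd hγ.le)
            apply (MeasureTheory.ae_restrict_iff' measurableSet_uIoc).mpr
            apply MeasureTheory.ae_of_all
            intro τ hτ
            rw [Set.uIoc_of_le hγ.le] at hτ
            have hdτ : d < τ := hτ.1
            calc ‖G ((c : ℂ) + (τ : ℂ) * Complex.I)‖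
                ≤ ‖B‖ / ((τ - ‖B‖) * τ) :=
                  key τ τ (by linarith) (le_trans (le_abs_self τ) (le_max_right _ _))
              _ ≤ g τ := hgle τ hdτ.le
        _ ≤ ‖B‖ / (d - ‖B‖) := aux_int_val ‖B‖ d γ hb0 hBd hγ
    · calc ‖∫ τ in (-γ)..(-d), G ((c : ℂ) + (τ : ℂ) * Complex.I)‖
          ≤ |∫ τ in (-γ)..(-d), g (-τ)| := by
            apply intervalIntegral.norm_integral_le_abs_of_norm_le _
              (((IntervalIntegrable.iff_comp_neg enorm_ne_top).mp
                (aux_integrable ‖B‖ d γ hBd hγ.le)).symm)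
            apply (MeasureTheory.ae_restrict_iff' measurableSet_uIoc).mpr
            apply MeasureTheory.ae_of_all
            intro τ hτ
            rw [Set.uIoc_of_le (by linarith : -γ ≤ -d)] at hτ
            have hdτ : d ≤ -τ := by
              have := hτ.2
              linarith
            calc ‖G ((c : ℂ) + (τ : ℂ) * Complex.I)‖
                ≤ ‖B‖ / ((-τ - ‖B‖) * (-τ)) :=
                  key τ (-τ) (by linarith) (le_trans (neg_le_abs τ) (le_max_right _ _))
              _ ≤ g (-τ) := hgle (-τ) hdτ
        _ = |∫ τ in d..γ, g τ| := by
            rw [intervalIntegral.integral_comp_neg g, neg_neg, neg_neg]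
        _ ≤ ‖B‖ / (d - ‖B‖) := aux_int_val ‖B‖ d γ hb0 hBd hγ
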